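/- arXiv:1708.03836 — 5 statements merged into one kernel-verified Lean document; each statement's English description precedes it below -/
import Mathlib

section
/- For any positive integer m, e^{χ(m)} ≤ gcd(m!, lcm{1,…,rm}) ≤ (rm)^{π(m)}, where χ(m) is the Chebyshev function Σ_{p ≤ m, p prime} log p, π(m) is the number of primes ≤ m, and r is any fixed positive integer. -/
open Filter Real

private lemma lcm_ne_zero {s : Finset ℕ} (h0 : 0 ∉ s) : s.lcm id ≠ 0 := by
  classical
  induction s using Finset.induction_on with
  | empty => simp
  | @insert a s _ ih =>
    rw [Finset.lcm_insert]
    have ha0 : a ≠ 0 := fun h => h0 (by simp [h])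
    have hs0 : s.lcm id ≠ 0 := ih (fun h => h0 (Finset.mem_insert_of_mem h))
    rw [id_eq, lcm_eq_nat_lcm]
    exact Nat.lcm_ne_zero ha0 hs0

private lemma fact_lcm_le {s : Finset ℕ} (h0 : 0 ∉ s) (p : ℕ) :
    (s.lcm id).factorization p ≤ s.sup (fun i => i.factorization p) := by
  classical
  induction s using Finset.induction_on with
  | empty => simp
  | @insert a s _ ih =>
    have ha0 : a ≠ 0 := fun h => h0 (by simp [h])
    have hs0 : 0 ∉ s := fun h => h0 (Finset.mem_insert_of_mem h)
    rw [Finset.lcm_insert, Finset.sup_insert, id_eq, lcm_eq_nat_lcm]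
    have := Nat.factorization_lcm ha0 (lcm_ne_zero hs0)
    have h2 : (Nat.lcm a (s.lcm id)).factorization p
        = max (a.factorization p) ((s.lcm id).factorization p) := by
      rw [this]; rfl
    rw [h2]
    exact max_le_max le_rfl (ih hs0)

/-- For positive integers `m` and a fixed positive integer `r`,
`e^{χ(m)} ≤ gcd(m!, lcm{1,…,rm}) ≤ (rm)^{π(m)}`, where `χ` is the Chebyshev
function and `π` the prime counting function. -/
theorem chebyshev_le_gcd_le_primeCounting (r m : ℕ) (hr : 0 < r) (hm : 0 < m) :
    Real.exp (∑ p ∈ (m + 1).primesBelow, Real.log p)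
        ≤ (Nat.gcd m.factorial ((Finset.Icc 1 (r * m)).lcm id) : ℝ) ∧
      (Nat.gcd m.factorial ((Finset.Icc 1 (r * m)).lcm id) : ℝ)
        ≤ ((r * m : ℕ) : ℝ) ^ (Nat.primeCounting m) := by
  classical
  set N := r * m with hN
  have hNm : m ≤ N := Nat.le_mul_of_pos_left m hr
  have hN1 : 1 ≤ N := le_trans hm hNm
  have h0 : (0 : ℕ) ∉ Finset.Icc 1 N := by simp
  set L := (Finset.Icc 1 N).lcm id with hL
  have hLne : L ≠ 0 := lcm_ne_zero h0
  set g := Nat.gcd m.factorial L with hg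
  have hgne : g ≠ 0 := by
    have : m.factorial ≠ 0 := Nat.factorial_ne_zero m
    simp [hg, Nat.gcd_eq_zero_iff, this]
  have hprimes : ∀ p ∈ (m + 1).primesBelow, p.Prime ∧ p ≤ m := by
    intro p hp
    rw [Nat.mem_primesBelow] at hp
    exact ⟨hp.2, Nat.lt_succ_iff.mp hp.1⟩
  constructor
  · -- lower bound
    have hdvd : (∏ p ∈ (m + 1).primesBelow, p) ∣ g := by
      apply Nat.dvd_gcd
      · exact Finset.prod_primes_dvd _
          (fun p hp => (hprimes p hp).1.prime)
          (fun p hp => (hprimes p hp).1.dvd_factorial.mpr (hprimes p hp).2)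
      · exact Finset.prod_primes_dvd _
          (fun p hp => (hprimes p hp).1.prime)
          (fun p hp => by
            have := (hprimes p hp)
            exact Finset.dvd_lcm (by
              simp only [Finset.mem_Icc]
              exact ⟨this.1.one_lt.le, le_trans this.2 hNm⟩))
    have hle : (∏ p ∈ (m + 1).primesBelow, p) ≤ g :=
      Nat.le_of_dvd (Nat.pos_of_ne_zero hgne) hdvd
    calc Real.exp (∑ p ∈ (m + 1).primesBelow, Real.log p)
        = ∏ p ∈ (m + 1).primesBelow, (p : ℝ) := by
          rw [Real.exp_sum]
          exact Finset.prod_congr rfl fun p hp =>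
            Real.exp_log (by exact_mod_cast (hprimes p hp).1.pos)
      _ ≤ (g : ℝ) := by rw [← Nat.cast_prod]; exact_mod_cast hle
  · -- upper bound
    have hsub : g.primeFactors ⊆ (m + 1).primesBelow := by
      intro p hp
      rw [Nat.mem_primeFactors] at hp
      rw [Nat.mem_primesBelow]
      refine ⟨Nat.lt_succ_of_le ?_, hp.1⟩
      have : p ∣ m.factorial := hp.2.1.trans (Nat.gcd_dvd_left _ _)
      exact (Nat.Prime.dvd_factorial hp.1).mp this
    have hfac : g = ∏ p ∈ (m + 1).primesBelow, p ^ g.factorization p := by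
      conv_lhs => rw [← Nat.factorization_prod_pow_eq_self hgne]
      rw [Nat.prod_factorization_eq_prod_primeFactors]
      refine Finset.prod_subset hsub (fun p _ hp => ?_)
      rw [← Nat.support_factorization, Finsupp.notMem_support_iff] at hp
      rw [hp, pow_zero]
    have hterm : ∀ p ∈ (m + 1).primesBelow, p ^ g.factorization p ≤ N := by
      intro p hp
      obtain ⟨hpp, hpm⟩ := hprimes p hp
      set k := g.factorization p with hk
      rcases Nat.eq_zero_or_pos k with h | h
      · simpa [h] using hN1
      · have h1 : k ≤ L.factorization p := by
          rw [← Nat.Prime.pow_dvd_iff_le_factorization hpp hLne]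
          exact dvd_trans (by
            rw [Nat.Prime.pow_dvd_iff_le_factorization hpp hgne]) (Nat.gcd_dvd_right _ _)
        have h2 : k ≤ (Finset.Icc 1 N).sup (fun i => i.factorization p) :=
          h1.trans (fact_lcm_le h0 p)
        obtain ⟨i, hi, hik⟩ := (Finset.le_sup_iff h).mp h2
        rw [Finset.mem_Icc] at hi
        have hine : i ≠ 0 := by omega
        have : p ^ k ∣ i := (Nat.Prime.pow_dvd_iff_le_factorization hpp hine).mpr hik
        exact le_trans (Nat.le_of_dvd (by omega) this) hi.2
    have hcard : ((m + 1).primesBelow).card = Nat.primeCounting m := by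
      rw [Nat.primesBelow_card_eq_primeCounting']
      rfl
    calc (g : ℝ) = ((∏ p ∈ (m + 1).primesBelow, p ^ g.factorization p : ℕ) : ℝ) := by
          exact Nat.cast_inj.mpr hfac
      _ ≤ ((N ^ ((m + 1).primesBelow).card : ℕ) : ℝ) := by
          have : (∏ p ∈ (m + 1).primesBelow, p ^ g.factorization p)
              ≤ ∏ _p ∈ (m + 1).primesBelow, N := Finset.prod_le_prod' hterm
          rw [Finset.prod_const] at this
          exact_mod_cast this
      _ = ((N : ℕ) : ℝ) ^ (Nat.primeCounting m) := by
          rw [hcard]; push_cast; ring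
end

section
/- Define sequences b_m of rationals by b_0 = 0, b_1 = Q_0 ∈ ℚ, and the recurrence −m^n·b_m = (Σ_{j=0}^n c_j'·(m−2)^j)·b_{m−2} + (Σ_{j=0}^n c_j''·(m−1)^j)·b_{m−1} for m ≥ 2, where c_j', c_j'' ∈ ℤ. Then, writing q_1 for the denominator of b_1, we have q_1·(m!)^n·b_m ∈ ℤ for all m. -/
/-!
Clearing denominators: multiplying the recurrence for `b (m + 2)` by `d · ((m + 1)!)ⁿ` expresses
`d · ((m + 2)!)ⁿ · b (m + 2)` as an integral combination of `d · (m!)ⁿ · b m` and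
`d · ((m + 1)!)ⁿ · b (m + 1)`, because `(m + 2)ⁿ · ((m + 1)!)ⁿ = ((m + 2)!)ⁿ`. Starting from
`d = q₁`, for which `q₁ · b 0 = 0` and `q₁ · b 1` are integers, induction does the rest.
-/

theorem exists_int_mul_factorial_pow_mul_of_two_step_recurrence
    (n : ℕ) (d : ℚ) (P R : ℕ → ℤ) (b : ℕ → ℚ)
    (hrec : ∀ m : ℕ, ((m : ℚ) + 2) ^ n * b (m + 2) = P m * b m + R m * b (m + 1))
    (h0 : ∃ z : ℤ, d * b 0 = z) (h1 : ∃ z : ℤ, d * b 1 = z) :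
    ∀ m : ℕ, ∃ z : ℤ, d * (m.factorial : ℚ) ^ n * b m = z := by
  refine Nat.twoStepInduction (by simpa using h0) (by simpa using h1) ?_
  rintro m ⟨z₀, hz₀⟩ ⟨z₁, hz₁⟩
  refine ⟨((m : ℤ) + 1) ^ n * P m * z₀ + R m * z₁, ?_⟩
  have hfac₁ : ((m + 1).factorial : ℚ) = ((m : ℚ) + 1) * m.factorial := by
    push_cast [Nat.factorial_succ]; ring
  have hfac₂ : ((m + 2).factorial : ℚ) = ((m : ℚ) + 2) * ((m + 1).factorial : ℚ) := by
    push_cast [Nat.factorial_succ]; ring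
  rw [hfac₁, mul_pow] at hz₁
  rw [hfac₂, hfac₁, mul_pow, mul_pow]
  push_cast
  linear_combination (d * ((m : ℚ) + 1) ^ n * (m.factorial : ℚ) ^ n) * hrec m
    + ((m : ℚ) + 1) ^ n * P m * hz₀ + R m * hz₁

theorem denominator_bound_of_picard_fuchs_recurrence_general
    (n : ℕ) (c' c'' : ℕ → ℤ) (b : ℕ → ℚ)
    (h0 : b 0 = 0)
    (hrec : ∀ m : ℕ, 2 ≤ m →
      -((m : ℚ)) ^ n * b m =
        (∑ j ∈ Finset.range (n + 1), (c' j : ℚ) * ((m : ℚ) - 2) ^ j) * b (m - 2)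
          + (∑ j ∈ Finset.range (n + 1), (c'' j : ℚ) * ((m : ℚ) - 1) ^ j) * b (m - 1)) :
    ∀ m : ℕ, ∃ z : ℤ, ((b 1).den : ℚ) * (m.factorial : ℚ) ^ n * b m = z := by
  refine exists_int_mul_factorial_pow_mul_of_two_step_recurrence n _
    (fun m ↦ -∑ j ∈ Finset.range (n + 1), c' j * (m : ℤ) ^ j)
    (fun m ↦ -∑ j ∈ Finset.range (n + 1), c'' j * ((m : ℤ) + 1) ^ j) b (fun m ↦ ?_)
    ⟨0, by simp [h0]⟩ ⟨(b 1).num, Rat.den_mul_eq_num _⟩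
  have h := hrec (m + 2) (by omega)
  simp only [Nat.add_sub_cancel, Nat.cast_add, Nat.cast_ofNat, add_sub_cancel_right,
    show m + 2 - 1 = m + 1 by omega, show (m : ℚ) + 2 - 1 = m + 1 by ring] at h
  push_cast
  linear_combination -h

/-- Formula (18-3): the recurrence arising from the inhomogeneous Picard–Fuchs
equation shows that the denominator of `b_m` divides `q_1·(m!)^n`. -/
theorem denominator_bound_of_picard_fuchs_recurrence
    (n : ℕ) (Q0 : ℚ) (c' c'' : ℕ → ℤ) (b : ℕ → ℚ)
    (h0 : b 0 = 0) (h1 : b 1 = Q0)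
    (hrec : ∀ m : ℕ, 2 ≤ m →
      -((m : ℚ)) ^ n * b m =
        (∑ j ∈ Finset.range (n + 1), (c' j : ℚ) * ((m : ℚ) - 2) ^ j) * b (m - 2)
          + (∑ j ∈ Finset.range (n + 1), (c'' j : ℚ) * ((m : ℚ) - 1) ^ j) * b (m - 1)) :
    ∀ m : ℕ, ∃ z : ℤ, ((b 1).den : ℚ) * (m.factorial : ℚ) ^ n * b m = z :=
  denominator_bound_of_picard_fuchs_recurrence_general n c' c'' b h0 hrec
end

section
/- The double integral ∫_{0 ≤ r ≤ s ≤ 1} log(1−r)·(1/s)·(1/(r(1−r))) dr ds equals −2ζ(3). -/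
/-!
Write `g r = log (1 - r) / (r (1 - r))`. Exchanging the order of integration and using
`∫_r^1 ds / s = -log r` turns the double integral into `-∫₀¹ g r · log r dr`, and
`g r · log r = log r log (1 - r) / r + log r log (1 - r) / (1 - r)`. The substitution `r ↦ 1 - r`
exchanges the two summands, and expanding `-log (1 - r) = ∑ r ^ (k + 1) / (k + 1)` together with
`∫₀¹ r ^ k log r dr = -1 / (k + 1) ^ 2` gives `∫₀¹ log r log (1 - r) / r dr = ζ(3)`.
-/

open Real Set MeasureTheory

theorem intervalIntegrable_pow_mul_log (k : ℕ) :
    IntervalIntegrable (fun x : ℝ => x ^ k * log x) volume 0 1 :=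
  intervalIntegral.intervalIntegrable_log'.continuousOn_mul (continuous_pow k).continuousOn

theorem integral_pow_mul_log (k : ℕ) :
    ∫ x in (0:ℝ)..1, x ^ k * log x = -(1 / ((k : ℝ) + 1) ^ 2) := by
  have hderiv : ∀ x ∈ Ioo (0:ℝ) 1, HasDerivAt
      (fun x => x ^ k * (x * log x) / (k + 1) - x ^ (k + 1) / ((k : ℝ) + 1) ^ 2)
      (x ^ k * log x) x := by
    intro x hx
    have hx0 : x ≠ 0 := hx.1.ne'
    have hpow := hasDerivAt_pow (k + 1) x
    rw [Nat.add_sub_cancel] at hpow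
    have hF : (fun x => x ^ k * (x * log x) / (k + 1) - x ^ (k + 1) / ((k : ℝ) + 1) ^ 2) =
        fun x => x ^ (k + 1) * log x / (k + 1) - x ^ (k + 1) / ((k : ℝ) + 1) ^ 2 := by
      funext y; ring
    rw [hF]
    refine (((hpow.mul (hasDerivAt_log hx0)).div_const _).sub (hpow.div_const _)).congr_deriv ?_
    push_cast
    field_simp
    ring
  rw [intervalIntegral.integral_eq_sub_of_hasDerivAt_of_le zero_le_one (by fun_prop) hderiv
    (intervalIntegrable_pow_mul_log k)]
  simp

theorem summable_one_div_nat_add_one_pow_three :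
    Summable fun k : ℕ => 1 / ((k : ℝ) + 1) ^ 3 := by
  exact_mod_cast (summable_nat_add_iff 1).2 (Real.summable_one_div_nat_pow.2 (by norm_num : 1 < 3))

theorem hasSum_log_mul_log_one_sub_div {x : ℝ} (hx : x ∈ Ioc (-1:ℝ) 1) :
    HasSum (fun k : ℕ => -(x ^ k * log x) / (k + 1)) (log x * log (1 - x) / x) := by
  rcases eq_or_ne x 0 with rfl | hx0
  · simp
  rcases hx.2.eq_or_lt with rfl | hx1
  · simp
  have hterm : (fun k : ℕ => -log x / x * (x ^ (k + 1) / (k + 1))) =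
      fun k : ℕ => -(x ^ k * log x) / (k + 1) := by
    funext k; field_simp; ring
  rw [show log x * log (1 - x) / x = -log x / x * -log (1 - x) by ring, ← hterm]
  exact (hasSum_pow_div_log_of_abs_lt_one (abs_lt.2 ⟨hx.1, hx1⟩)).mul_left _

theorem hasSum_integral_log_mul_log_one_sub_div :
    HasSum (fun k : ℕ => 1 / ((k : ℝ) + 1) ^ 3)
      (∫ x in (0:ℝ)..1, log x * log (1 - x) / x) := by
  set F : ℕ → ℝ → ℝ := fun k x => -(x ^ k * log x) / (k + 1)
  have hF_int : ∀ k, IntervalIntegrable (F k) volume 0 1 := fun k =>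
    (intervalIntegrable_pow_mul_log k).neg.div_const _
  have hF_integral : ∀ k, ∫ x in (0:ℝ)..1, F k x = 1 / ((k : ℝ) + 1) ^ 3 := by
    intro k
    simp only [F, intervalIntegral.integral_div, intervalIntegral.integral_neg,
      integral_pow_mul_log]
    field_simp
  have hF_norm : ∀ k, ∫ x in Ioc (0:ℝ) 1, ‖F k x‖ = 1 / ((k : ℝ) + 1) ^ 3 := by
    intro k
    rw [← hF_integral k, intervalIntegral.integral_of_le zero_le_one]
    refine setIntegral_congr_fun measurableSet_Ioc fun x hx => norm_of_nonneg ?_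
    exact div_nonneg (neg_nonneg.2 (mul_nonpos_of_nonneg_of_nonpos (pow_nonneg hx.1.le k)
      (log_nonpos hx.1.le hx.2))) (by positivity)
  have key := hasSum_integral_of_summable_integral_norm
    (fun k => (intervalIntegrable_iff_integrableOn_Ioc_of_le zero_le_one).1 (hF_int k))
    (by simpa only [hF_norm] using summable_one_div_nat_add_one_pow_three)
  simp only [← intervalIntegral.integral_of_le zero_le_one, hF_integral] at key
  rwa [intervalIntegral.integral_congr (g := fun x => log x * log (1 - x) / x) fun x hx => by
    rw [uIcc_of_le zero_le_one] at hx
    exact (hasSum_log_mul_log_one_sub_div ⟨by linarith [hx.1], hx.2⟩).tsum_eq] at key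

theorem intervalIntegrable_log_mul_log_one_sub_div :
    IntervalIntegrable (fun x => log x * log (1 - x) / x) volume 0 1 := by
  -- the integral is the positive number `ζ(3)`, so it is not the junk value `0`
  -- of a non-integrable function
  refine intervalIntegral.intervalIntegrable_of_integral_ne_zero ?_
  rw [← hasSum_integral_log_mul_log_one_sub_div.tsum_eq]
  exact (summable_one_div_nat_add_one_pow_three.tsum_pos (fun k => by positivity) 0
    (by norm_num)).ne'

theorem intervalIntegrable_log_mul_log_one_sub_div_one_sub :
    IntervalIntegrable (fun x => log x * log (1 - x) / (1 - x)) volume 0 1 := by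
  simpa [mul_comm] using (intervalIntegrable_log_mul_log_one_sub_div.comp_sub_left 1).symm

theorem integral_log_mul_log_one_sub_div_one_sub :
    ∫ x in (0:ℝ)..1, log x * log (1 - x) / (1 - x) =
      ∫ x in (0:ℝ)..1, log x * log (1 - x) / x := by
  simpa [mul_comm] using intervalIntegral.integral_comp_sub_left (a := 0) (b := 1)
    (fun x => log x * log (1 - x) / x) 1

-- At `x = 0` and `x = 1` both sides vanish, because `log 1 = 0` and `a / 0 = 0`.
theorem log_one_sub_div_mul_log (x : ℝ) :
    log (1 - x) / (x * (1 - x)) * log x =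
      log x * log (1 - x) / x + log x * log (1 - x) / (1 - x) := by
  rcases eq_or_ne x 0 with rfl | hx0
  · simp
  rcases eq_or_ne x 1 with rfl | hx1
  · simp
  have : 1 - x ≠ 0 := sub_ne_zero.2 hx1.symm
  field_simp
  ring

theorem setIntegral_Ioc_indicator_Ici_div {r : ℝ} (hr : r ∈ Ioc (0:ℝ) 1) (c : ℝ) :
    ∫ s in Ioc (0:ℝ) 1, (Ici r).indicator (fun s => c / s) s = -(c * log r) := by
  have hset : Ici r ∩ Ioc 0 1 = Icc r 1 := by
    ext s
    simp only [mem_inter_iff, mem_Ici, mem_Ioc, mem_Icc]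
    exact ⟨fun h => ⟨h.1, h.2.2⟩, fun h => ⟨h.1, hr.1.trans_le h.1, h.2⟩⟩
  rw [integral_indicator measurableSet_Ici, Measure.restrict_restrict measurableSet_Ici, hset,
    integral_Icc_eq_integral_Ioc, ← intervalIntegral.integral_of_le hr.2]
  simp only [div_eq_mul_inv, intervalIntegral.integral_const_mul,
    integral_inv_of_pos hr.1 one_pos, one_mul, log_inv]
  ring

section TriangleKernel

variable {g : ℝ → ℝ}

theorem indicator_Iic_div_eq_indicator_Ici (s r : ℝ) :
    (Iic s).indicator (fun r => g r / s) r = (Ici r).indicator (fun s => g r / s) s := by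
  simp [indicator_apply]

theorem integral_norm_indicator_Iic_div {r : ℝ} (hr : r ∈ Ioc (0:ℝ) 1) :
    ∫ s in Ioc (0:ℝ) 1, ‖(Iic s).indicator (fun r => g r / s) r‖ = ‖g r * log r‖ := by
  have hnorm : (fun s => ‖(Iic s).indicator (fun r => g r / s) r‖) =
      (Ici r).indicator (fun s => ‖g r‖ / s) := by
    ext s
    by_cases hrs : r ≤ s
    · simp [hrs, norm_div, abs_of_pos (hr.1.trans_le hrs)]
    · simp [hrs]
  rw [hnorm, setIntegral_Ioc_indicator_Ici_div hr, norm_mul,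
    norm_of_nonpos (log_nonpos hr.1.le hr.2)]
  ring

theorem integrable_indicator_Iic_div (hg : Measurable g)
    (hint : IntegrableOn (fun r => g r * log r) (Ioc 0 1)) :
    Integrable (Function.uncurry fun s r => (Iic s).indicator (fun r => g r / s) r)
      ((volume.restrict (Ioc (0:ℝ) 1)).prod (volume.restrict (Ioc (0:ℝ) 1))) := by
  have hmeas : Measurable (Function.uncurry fun s r => (Iic s).indicator (fun r => g r / s) r) :=
    ((hg.comp measurable_snd).div measurable_fst).indicator
      (measurableSet_le measurable_snd measurable_fst)
  refine (integrable_prod_iff' hmeas.aestronglyMeasurable).2 ⟨?_, ?_⟩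
  · filter_upwards [ae_restrict_mem measurableSet_Ioc] with r hr
    refine Integrable.mono' (integrable_const (‖g r‖ / r))
      (hmeas.comp measurable_prodMk_right).aestronglyMeasurable (.of_forall fun s => ?_)
    by_cases hrs : r ≤ s
    · simp only [Function.uncurry_apply_pair, indicator_of_mem (mem_Iic.2 hrs), norm_div,
        norm_of_nonneg (hr.1.le.trans hrs)]
      gcongr
      exact hr.1
    · simp only [Function.uncurry_apply_pair, indicator_of_notMem (mt mem_Iic.1 hrs), norm_zero]
      exact div_nonneg (norm_nonneg _) hr.1.le
  · refine hint.norm.congr ?_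
    filter_upwards [ae_restrict_mem measurableSet_Ioc] with r hr
    exact (integral_norm_indicator_Iic_div hr).symm

theorem integral_integral_div_eq_neg_integral_mul_log (hg : Measurable g)
    (hint : IntervalIntegrable (fun r => g r * log r) volume 0 1) :
    ∫ s in (0:ℝ)..1, ∫ r in (0:ℝ)..s, g r / s = -∫ r in (0:ℝ)..1, g r * log r := by
  rw [intervalIntegrable_iff_integrableOn_Ioc_of_le zero_le_one] at hint
  have hinner : ∀ s ∈ Ioc (0:ℝ) 1, ∫ r in (0:ℝ)..s, g r / s =
      ∫ r in Ioc (0:ℝ) 1, (Iic s).indicator (fun r => g r / s) r := by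
    intro s hs
    have hset : Iic s ∩ Ioc 0 1 = Ioc 0 s := by
      ext r
      simp only [mem_inter_iff, mem_Iic, mem_Ioc]
      exact ⟨fun h => ⟨h.2.1, h.1⟩, fun h => ⟨h.2, h.1, h.2.trans hs.2⟩⟩
    rw [intervalIntegral.integral_of_le hs.1.le, integral_indicator measurableSet_Iic,
      Measure.restrict_restrict measurableSet_Iic, hset]
  have houter : ∀ r ∈ Ioc (0:ℝ) 1,
      ∫ s in Ioc (0:ℝ) 1, (Iic s).indicator (fun r => g r / s) r = -(g r * log r) := by
    intro r hr
    simp only [indicator_Iic_div_eq_indicator_Ici (r := r)]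
    exact setIntegral_Ioc_indicator_Ici_div hr _
  rw [intervalIntegral.integral_of_le zero_le_one, intervalIntegral.integral_of_le zero_le_one,
    setIntegral_congr_fun measurableSet_Ioc hinner,
    integral_integral_swap (integrable_indicator_Iic_div hg hint),
    setIntegral_congr_fun measurableSet_Ioc houter, integral_neg]

end TriangleKernel

/-- The double integral `∫_{0 ≤ r ≤ s ≤ 1} log(1−r)·(1/s)·(1/(r(1−r))) dr ds`
equals `−2ζ(3)`. -/
theorem double_integral_eq_neg_two_zeta_three :
    (∫ s in (0:ℝ)..1, ∫ r in (0:ℝ)..s,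
        Real.log (1 - r) * (1 / s) * (1 / (r * (1 - r))))
      = -2 * ∑' k : ℕ, 1 / ((k : ℝ) + 1) ^ 3 := by
  have hint := intervalIntegrable_log_mul_log_one_sub_div.add
    intervalIntegrable_log_mul_log_one_sub_div_one_sub
  calc (∫ s in (0:ℝ)..1, ∫ r in (0:ℝ)..s, log (1 - r) * (1 / s) * (1 / (r * (1 - r))))
      = ∫ s in (0:ℝ)..1, ∫ r in (0:ℝ)..s, log (1 - r) / (r * (1 - r)) / s := by
        refine intervalIntegral.integral_congr fun s _ => ?_
        refine intervalIntegral.integral_congr fun r _ => ?_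
        ring
    _ = -∫ r in (0:ℝ)..1, log (1 - r) / (r * (1 - r)) * log r :=
        integral_integral_div_eq_neg_integral_mul_log (by fun_prop)
          (by simpa only [log_one_sub_div_mul_log] using hint)
    _ = -2 * ∑' k : ℕ, 1 / ((k : ℝ) + 1) ^ 3 := by
        simp only [log_one_sub_div_mul_log]
        rw [intervalIntegral.integral_add intervalIntegrable_log_mul_log_one_sub_div
          intervalIntegrable_log_mul_log_one_sub_div_one_sub,
          integral_log_mul_log_one_sub_div_one_sub,
          ← hasSum_integral_log_mul_log_one_sub_div.tsum_eq]
        ring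
end

section
/- Define the Apéry numbers a_m = Σ_{k=0}^m C(m,k)²·C(m+k,k)². Then the sequence satisfies the recurrence m³·a_m = (34m³ − 51m² + 27m − 5)·a_{m−1} − (m−1)³·a_{m−2} for m ≥ 2, with a_0 = 1, a_1 = 5. -/
/-!
Zeilberger's creative telescoping, in the form of van der Poorten's account of Apéry's proof.
Write `F(n, k) = (C(n,k) C(n+k,k))²`. With the certificate
`B(n, k) = 4 (2n+1) (k(2k+1) - (2n+1)²) F(n, k)` one has, for every `k`,
`(n+1)³ F(n+1,k) - (34n³+51n²+27n+5) F(n,k) + n³ F(n-1,k) = B(n,k) - B(n,k-1)`.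
All five terms are polynomial multiples of `(C(n,k-1) C(n+k-1,k-1))² / k⁴`, so this is a
polynomial identity; summing over `k` the right-hand side telescopes to `0`.
-/

open Finset

lemma Nat.cast_choose_mul_cast_sub (n k : ℕ) :
    (n.choose k : ℤ) * ((n - k : ℕ) : ℤ) = n.choose k * ((n : ℤ) - k) := by
  rcases le_or_gt k n with hk | hk
  · push_cast [hk]; ring
  · simp [Nat.choose_eq_zero_of_lt hk]

def aperyBinom (n k : ℕ) : ℤ := n.choose k * (n + k).choose k

lemma aperyBinom_zero_right (n : ℕ) : aperyBinom n 0 = 1 := by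
  simp [aperyBinom]

lemma aperyBinom_eq_zero_of_lt {n k : ℕ} (h : n < k) : aperyBinom n k = 0 := by
  simp [aperyBinom, Nat.choose_eq_zero_of_lt h]

lemma aperyBinom_succ_left (n k : ℕ) :
    aperyBinom (n + 1) k * ((n : ℤ) + 1 - k) = aperyBinom n k * (n + k + 1) := by
  have h₁ : ((n + 1).choose k : ℤ) * ((n : ℤ) + 1 - k) = n.choose k * (n + 1) := by
    have := congrArg (Nat.cast : ℕ → ℤ) (Nat.choose_mul_succ_eq n k)
    rw [Nat.cast_mul, Nat.cast_mul, Nat.cast_choose_mul_cast_sub] at this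
    push_cast at this
    linear_combination -this
  have h₂ : ((n + k).choose k : ℤ) * (n + 1 + k) = (n + 1 + k).choose k * (n + 1) := by
    have := congrArg (Nat.cast : ℕ → ℤ) (Nat.choose_mul_succ_eq (n + k) k)
    rw [Nat.add_right_comm, Nat.add_sub_cancel] at this
    exact_mod_cast this
  simp only [aperyBinom]
  linear_combination ((n + 1 + k).choose k : ℤ) * h₁ - (n.choose k : ℤ) * h₂

lemma aperyBinom_succ_right (n k : ℕ) :
    aperyBinom n (k + 1) * ((k : ℤ) + 1) ^ 2 = aperyBinom n k * (n + k + 1) * (n - k) := by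
  have h₁ : (n.choose (k + 1) : ℤ) * (k + 1) = n.choose k * ((n : ℤ) - k) := by
    have := congrArg (Nat.cast : ℕ → ℤ) (Nat.choose_succ_right_eq n k)
    rw [Nat.cast_mul, Nat.cast_mul, Nat.cast_choose_mul_cast_sub] at this
    exact_mod_cast this
  have h₂ : ((n + (k + 1)).choose (k + 1) : ℤ) * (k + 1) = (n + k + 1) * (n + k).choose k := by
    have := congrArg (Nat.cast : ℕ → ℤ) (Nat.add_one_mul_choose_eq (n + k) k)
    push_cast at this
    rw [← Nat.add_assoc]
    linear_combination -this
  simp only [aperyBinom]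
  linear_combination ((n + (k + 1)).choose (k + 1) : ℤ) * (k + 1) * h₁
    + (n.choose k : ℤ) * (n - k) * h₂

lemma aperyBinom_succ_succ (n k : ℕ) :
    aperyBinom (n + 1) (k + 1) * ((k : ℤ) + 1) ^ 2
      = aperyBinom n k * (n + k + 1) * (n + k + 2) := by
  have h₁ := aperyBinom_succ_right (n + 1) k
  have h₂ := aperyBinom_succ_left n k
  push_cast at h₁
  linear_combination h₁ + (n + k + 2) * h₂

/-- The certificate `B(n, k - 1)`, with `B(n, -1) = 0`. -/
def aperyCert (n : ℕ) : ℕ → ℤ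
  | 0 => 0
  | k + 1 => 4 * (2 * n + 1) * (k * (2 * k + 1) - (2 * n + 1) ^ 2) * aperyBinom n k ^ 2

lemma aperyBinom_sq_wz (n k : ℕ) :
    ((n : ℤ) + 2) ^ 3 * aperyBinom (n + 2) k ^ 2
      = (34 * ((n : ℤ) + 2) ^ 3 - 51 * ((n : ℤ) + 2) ^ 2 + 27 * ((n : ℤ) + 2) - 5)
          * aperyBinom (n + 1) k ^ 2
        - ((n : ℤ) + 1) ^ 3 * aperyBinom n k ^ 2
        + (aperyCert (n + 1) (k + 1) - aperyCert (n + 1) k) := by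
  rcases k with _ | j
  · simp only [aperyCert, aperyBinom_zero_right]
    push_cast
    ring
  set g := aperyBinom (n + 1) j
  have hX : aperyBinom (n + 2) (j + 1) ^ 2 * ((j : ℤ) + 1) ^ 4
      = g ^ 2 * (n + j + 2) ^ 2 * (n + j + 3) ^ 2 := by
    have := congrArg (· ^ 2) (aperyBinom_succ_succ (n + 1) j)
    push_cast at this
    linear_combination this
  have hY : aperyBinom (n + 1) (j + 1) ^ 2 * ((j : ℤ) + 1) ^ 4
      = g ^ 2 * (n + j + 2) ^ 2 * (n + 1 - j) ^ 2 := by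
    have := congrArg (· ^ 2) (aperyBinom_succ_right (n + 1) j)
    push_cast at this
    linear_combination this
  have hZ : aperyBinom n (j + 1) ^ 2 * ((j : ℤ) + 1) ^ 4
      = g ^ 2 * (n - j) ^ 2 * (n + 1 - j) ^ 2 := by
    have hZ₁ : aperyBinom n (j + 1) * ((j : ℤ) + 1) ^ 2 = g * (n - j) * (n + 1 - j) := by
      linear_combination aperyBinom_succ_right n j - (n - j) * aperyBinom_succ_left n j
    linear_combination congrArg (· ^ 2) hZ₁
  refine mul_left_cancel₀ (pow_ne_zero 4 (by positivity : (j : ℤ) + 1 ≠ 0)) ?_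
  simp only [aperyCert]
  push_cast
  linear_combination ((n : ℤ) + 2) ^ 3 * hX + ((n : ℤ) + 1) ^ 3 * hZ
    - (34 * ((n : ℤ) + 2) ^ 3 - 51 * ((n : ℤ) + 2) ^ 2 + 27 * ((n : ℤ) + 2) - 5
      + 4 * (2 * n + 3) * ((j + 1) * (2 * j + 3) - (2 * n + 3) ^ 2)) * hY

lemma sum_range_aperyBinom_sq_of_le {m N : ℕ} (h : m ≤ N) :
    ∑ k ∈ range (N + 1), aperyBinom m k ^ 2 = ∑ k ∈ range (m + 1), aperyBinom m k ^ 2 := by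
  refine (sum_subset (range_subset_range.2 (by omega)) fun k _ hk => ?_).symm
  rw [aperyBinom_eq_zero_of_lt (by simpa using hk), zero_pow two_ne_zero]

lemma sum_range_aperyBinom_sq_recurrence (n : ℕ) :
    ((n : ℤ) + 2) ^ 3 * ∑ k ∈ range (n + 3), aperyBinom (n + 2) k ^ 2
      = (34 * ((n : ℤ) + 2) ^ 3 - 51 * ((n : ℤ) + 2) ^ 2 + 27 * ((n : ℤ) + 2) - 5)
          * ∑ k ∈ range (n + 2), aperyBinom (n + 1) k ^ 2
        - ((n : ℤ) + 1) ^ 3 * ∑ k ∈ range (n + 1), aperyBinom n k ^ 2 := by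
  have hwz := sum_congr (s₁ := range (n + 3)) rfl fun k _ => aperyBinom_sq_wz n k
  have hcert : aperyCert (n + 1) (n + 3) = 0 := by
    simp [aperyCert, aperyBinom_eq_zero_of_lt (Nat.lt_succ_self (n + 1))]
  rw [sum_add_distrib, sum_sub_distrib, ← mul_sum, ← mul_sum, ← mul_sum,
    sum_range_sub (aperyCert (n + 1)), hcert, aperyCert,
    sum_range_aperyBinom_sq_of_le (by omega : n + 1 ≤ n + 2),
    sum_range_aperyBinom_sq_of_le (by omega : n ≤ n + 2)] at hwz
  linear_combination hwz

/-- The Apéry numbers `a_m = Σ_{k=0}^m C(m,k)²·C(m+k,k)²` satisfy `a_0 = 1`,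
`a_1 = 5`, and the recurrence
`m³·a_m = (34m³ − 51m² + 27m − 5)·a_{m−1} − (m−1)³·a_{m−2}` for `m ≥ 2`. -/
theorem apery_recurrence (a : ℕ → ℕ)
    (ha : ∀ m, a m = ∑ k ∈ Finset.range (m + 1),
      (m.choose k) ^ 2 * ((m + k).choose k) ^ 2) :
    a 0 = 1 ∧ a 1 = 5 ∧
      ∀ m : ℕ, 2 ≤ m →
        (m : ℤ) ^ 3 * a m =
          (34 * (m : ℤ) ^ 3 - 51 * (m : ℤ) ^ 2 + 27 * (m : ℤ) - 5) * a (m - 1)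
            - ((m : ℤ) - 1) ^ 3 * a (m - 2) := by
  refine ⟨by simp [ha], by simp [ha, sum_range_succ], fun m hm => ?_⟩
  have ha' (m : ℕ) : (a m : ℤ) = ∑ k ∈ range (m + 1), aperyBinom m k ^ 2 := by
    simp [ha, aperyBinom, mul_pow]
  obtain ⟨n, rfl⟩ : ∃ n, m = n + 2 := ⟨m - 2, by omega⟩
  rw [Nat.add_sub_cancel, show n + 2 - 1 = n + 1 by omega, ha', ha', ha']
  push_cast
  linear_combination sum_range_aperyBinom_sq_recurrence n
end

section
/- Define the 'baby Apéry' numbers a_m = Σ_{k=0}^m C(m,k)²·C(m+k,k). Then a_0 = 1, a_1 = 3, a_2 = 19, a_3 = 147, and the generating series Σ a_m t^m is annihilated by the operator (t² + 11t − 1)δ_t² + t(2t + 11)δ_t + t(t + 3), where δ_t = t·d/dt; equivalently, m²·a_m = (11m² − 11m + 3)·a_{m−1} + (m−1)²·a_{m−2} for m ≥ 2. -/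
open Finset Nat

noncomputable def fQ (n k : ℕ) : ℚ := ((n.choose k : ℕ) : ℚ)^2 * (((n+k).choose k : ℕ) : ℚ)

noncomputable def HQ (n : ℕ) : ℕ → ℚ
  | 0 => 0
  | (k+1) => (((k:ℚ)+1)^2 + (6*((n:ℚ)+2)-5)*((k:ℚ)+1) - 11*((n:ℚ)+2)^2 + 7*((n:ℚ)+2)) * fQ (n+1) k

lemma chq' (n a b : ℕ) (h : n = a + b) : ((n.choose a : ℕ) : ℚ) = (n)! / ((a)! * (b)!) := by
  subst h; exact Nat.cast_add_choose ℚ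

lemma fac0 (x b : ℕ) (h : x = b) : ((x ! : ℕ) : ℚ) = (b ! : ℕ) := by rw [h]

lemma fac1 (x b : ℕ) (h : x = b + 1) : ((x ! : ℕ) : ℚ) = ((b:ℚ)+1) * ((b ! : ℕ) : ℚ) := by
  subst h; rw [Nat.factorial_succ]; push_cast; ring

lemma fac2 (x b : ℕ) (h : x = b + 2) : ((x ! : ℕ) : ℚ) = ((b:ℚ)+2) * ((b:ℚ)+1) * ((b ! : ℕ) : ℚ) := by
  subst h
  rw [show b+2 = (b+1)+1 from rfl, Nat.factorial_succ, Nat.factorial_succ]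
  push_cast; ring

lemma facne (x : ℕ) : ((x ! : ℕ) : ℚ) ≠ 0 := Nat.cast_ne_zero.2 (Nat.factorial_ne_zero x)

set_option maxHeartbeats 2000000 in
lemma key (n k : ℕ) :
    ((n:ℚ)+2)^2 * fQ (n+2) k - (11*((n:ℚ)+2)^2 - 11*((n:ℚ)+2) + 3) * fQ (n+1) k
      - ((n:ℚ)+1)^2 * fQ n k = HQ n (k+1) - HQ n k := by
  rcases k with _ | j
  · simp [fQ, HQ]
    ring
  · rcases Nat.lt_or_ge j n with hj | hj
    · -- main case: k = j+1 ≤ n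
      obtain ⟨c, rfl⟩ : ∃ c, n = j + 1 + c := ⟨n - (j+1), by omega⟩
      have h1 := facne j
      have h2 := facne c
      have h3 := facne (j+c+1)
      have h4 := facne (2*j+c+2)
      have hj1 : (j:ℚ) + 1 ≠ 0 := by positivity
      have hc1 : (c:ℚ) + 1 ≠ 0 := by positivity
      have hc2 : (c:ℚ) + 2 ≠ 0 := by positivity
      set T : ℚ := (((j+c+1)! : ℕ) : ℚ) * (((2*j+c+2)! : ℕ) : ℚ) / ((((j)! : ℕ) : ℚ)^3 * (((c)! : ℕ) : ℚ)^2) with hT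
      have e1 : fQ (j+1+c+2) (j+1)
          = ((j:ℚ)+c+3)*((j:ℚ)+c+2)*(2*(j:ℚ)+c+4)*(2*(j:ℚ)+c+3)
            / (((j:ℚ)+1)^3 * ((c:ℚ)+2)^2 * ((c:ℚ)+1)^2) * T := by
        rw [hT]
        simp only [fQ]
        rw [chq' (j+1+c+2) (j+1) (c+2) (by ring),
            chq' (j+1+c+2+(j+1)) (j+1) (j+c+3) (by ring),
            fac2 (j+1+c+2) (j+c+1) (by ring),
            fac2 (j+1+c+2+(j+1)) (2*j+c+2) (by ring),
            fac2 (j+c+3) (j+c+1) (by ring),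
            fac1 (j+1) j rfl,
            fac2 (c+2) c rfl]
        push_cast
        field_simp
        ring
      have e2 : fQ (j+1+c+1) (j+1)
          = ((j:ℚ)+c+2)*(2*(j:ℚ)+c+3) / (((j:ℚ)+1)^3 * ((c:ℚ)+1)^2) * T := by
        rw [hT]
        simp only [fQ]
        rw [chq' (j+1+c+1) (j+1) (c+1) (by ring),
            chq' (j+1+c+1+(j+1)) (j+1) (j+c+2) (by ring),
            fac1 (j+1+c+1) (j+c+1) (by ring),
            fac1 (j+1+c+1+(j+1)) (2*j+c+2) (by ring),
            fac1 (j+c+2) (j+c+1) (by ring),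
            fac1 (j+1) j rfl,
            fac1 (c+1) c rfl]
        push_cast
        field_simp
        ring
      have e3 : fQ (j+1+c) (j+1) = 1 / ((j:ℚ)+1)^3 * T := by
        rw [hT]
        simp only [fQ]
        rw [chq' (j+1+c) (j+1) c (by ring),
            chq' (j+1+c+(j+1)) (j+1) (j+c+1) (by ring),
            fac0 (j+1+c) (j+c+1) (by ring),
            fac0 (j+1+c+(j+1)) (2*j+c+2) (by ring),
            fac1 (j+1) j rfl]
        push_cast
        field_simp
      have e4 : fQ (j+1+c+1) j
          = ((j:ℚ)+c+2) / (((c:ℚ)+2)^2 * ((c:ℚ)+1)^2) * T := by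
        rw [hT]
        simp only [fQ]
        rw [chq' (j+1+c+1) j (c+2) (by ring),
            chq' (j+1+c+1+j) j (j+c+2) (by ring),
            fac1 (j+1+c+1) (j+c+1) (by ring),
            fac0 (j+1+c+1+j) (2*j+c+2) (by ring),
            fac1 (j+c+2) (j+c+1) (by ring),
            fac2 (c+2) c rfl]
        push_cast
        field_simp
        ring
      simp only [HQ]
      rw [e1, e2, e3, e4]
      push_cast
      field_simp
      ring
    · rcases Nat.lt_or_ge (n+1) j with hj2 | hj2
      · -- k = j+1 ≥ n+3 : everything vanishes
        simp only [fQ, HQ]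
        rw [Nat.choose_eq_zero_of_lt (show n+2 < j+1 by omega),
            Nat.choose_eq_zero_of_lt (show n+1 < j+1 by omega),
            Nat.choose_eq_zero_of_lt (show n < j+1 by omega),
            Nat.choose_eq_zero_of_lt (show n+1 < j by omega)]
        push_cast
        ring
      · rcases Nat.eq_or_lt_of_le hj with hj3 | hj3
        · -- j = n, k = n+1
          obtain rfl : n = j := hj3
          simp only [fQ, HQ]
          rw [Nat.choose_eq_zero_of_lt (show n < n+1 by omega),
              chq' (n+2) (n+1) 1 (by ring),
              chq' (n+2+(n+1)) (n+1) (n+2) (by ring),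
              chq' (n+1) (n+1) 0 (by ring),
              chq' (n+1+(n+1)) (n+1) (n+1) (by ring),
              chq' (n+1) n 1 (by ring),
              chq' (n+1+n) n (n+1) (by ring)]
          rw [fac2 (n+2) n rfl,
              fac2 (n+2+(n+1)) (2*n+1) (by ring),
              fac1 (n+1+(n+1)) (2*n+1) (by ring),
              fac0 (n+1+n) (2*n+1) (by ring),
              fac1 (n+1) n rfl]
          simp only [Nat.factorial_zero, Nat.factorial_one]
          have h1 := facne n
          have h2 := facne (2*n+1)
          have hn1 : (n:ℚ) + 1 ≠ 0 := by positivity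
          have hn2 : (n:ℚ) + 2 ≠ 0 := by positivity
          have hn3 : 2*(n:ℚ) + 2 ≠ 0 := by positivity
          have hn4 : 2*(n:ℚ) + 3 ≠ 0 := by positivity
          push_cast
          norm_num
          field_simp
          ring
        · -- j = n+1, k = n+2
          obtain rfl : j = n + 1 := by omega
          simp only [fQ, HQ]
          rw [Nat.choose_eq_zero_of_lt (show n+1 < n+1+1 by omega),
              Nat.choose_eq_zero_of_lt (show n < n+1+1 by omega),
              chq' (n+2) (n+1+1) 0 (by ring),
              chq' (n+2+(n+1+1)) (n+1+1) (n+2) (by ring),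
              chq' (n+1) (n+1) 0 (by ring),
              chq' (n+1+(n+1)) (n+1) (n+1) (by ring)]
          rw [fac2 (n+2) n rfl,
              fac2 (n+2+(n+1+1)) (2*n+2) (by ring),
              fac1 (n+1) n rfl,
              fac0 (n+1+(n+1)) (2*n+2) (by ring)]
          simp only [Nat.factorial_zero]
          have h1 := facne n
          have h2 := facne (2*n+2)
          have hn1 : (n:ℚ) + 1 ≠ 0 := by positivity
          have hn2 : (n:ℚ) + 2 ≠ 0 := by positivity
          have hn3 : 2*(n:ℚ) + 3 ≠ 0 := by positivity
          have hn4 : 2*(n:ℚ) + 4 ≠ 0 := by positivity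
          push_cast
          norm_num
          field_simp
          ring

lemma sum_zero (n : ℕ) :
    ∑ k ∈ range (n+3), (((n:ℚ)+2)^2 * fQ (n+2) k
      - (11*((n:ℚ)+2)^2 - 11*((n:ℚ)+2) + 3) * fQ (n+1) k - ((n:ℚ)+1)^2 * fQ n k) = 0 := by
  rw [Finset.sum_congr rfl (fun k _ => key n k), Finset.sum_range_sub (HQ n)]
  rw [show n+3 = (n+2)+1 from rfl]
  simp only [HQ, fQ]
  rw [Nat.choose_eq_zero_of_lt (show n+1 < n+2 by omega)]
  push_cast
  ring

/-- The "baby Apéry" numbers `a_m = Σ_{k=0}^m C(m,k)²·C(m+k,k)` satisfy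
`a_0 = 1`, `a_1 = 3`, `a_2 = 19`, `a_3 = 147`, and the recurrence
`m²·a_m = (11m² − 11m + 3)·a_{m−1} + (m−1)²·a_{m−2}` for `m ≥ 2`
(equivalently, the generating series is annihilated by
`(t² + 11t − 1)δ_t² + t(2t + 11)δ_t + t(t + 3)`). -/
theorem baby_apery_recurrence (a : ℕ → ℕ)
    (ha : ∀ m, a m = ∑ k ∈ Finset.range (m + 1),
      (m.choose k) ^ 2 * ((m + k).choose k)) :
    a 0 = 1 ∧ a 1 = 3 ∧ a 2 = 19 ∧ a 3 = 147 ∧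
      ∀ m : ℕ, 2 ≤ m →
        (m : ℤ) ^ 2 * a m =
          (11 * (m : ℤ) ^ 2 - 11 * (m : ℤ) + 3) * a (m - 1)
            + ((m : ℤ) - 1) ^ 2 * a (m - 2) := by
  have haQ : ∀ m, (a m : ℚ) = ∑ k ∈ range (m+1), fQ m k := by
    intro m
    rw [ha m]
    push_cast
    simp [fQ]
  refine ⟨by rw [ha]; decide, by rw [ha]; decide, by rw [ha]; decide, by rw [ha]; decide, ?_⟩
  intro m hm
  obtain ⟨n, rfl⟩ : ∃ n, m = n + 2 := ⟨m - 2, by omega⟩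
  have h1 : (n + 2 - 1) = n + 1 := by omega
  have h2 : (n + 2 - 2) = n := by omega
  rw [h1, h2]
  have e2 : ∑ k ∈ range (n+3), fQ (n+2) k = (a (n+2) : ℚ) := (haQ (n+2)).symm
  have e1 : ∑ k ∈ range (n+3), fQ (n+1) k = (a (n+1) : ℚ) := by
    rw [Finset.sum_range_succ, haQ (n+1)]
    have : fQ (n+1) (n+2) = 0 := by
      simp [fQ, Nat.choose_eq_zero_of_lt (show n+1 < n+2 by omega)]
    rw [this, add_zero]
  have e0 : ∑ k ∈ range (n+3), fQ n k = (a n : ℚ) := by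
    rw [Finset.sum_range_succ, Finset.sum_range_succ, haQ n]
    have t1 : fQ n (n+2) = 0 := by
      simp [fQ, Nat.choose_eq_zero_of_lt (show n < n+2 by omega)]
    have t2 : fQ n (n+1) = 0 := by
      simp [fQ, Nat.choose_eq_zero_of_lt (show n < n+1 by omega)]
    rw [t1, t2, add_zero, add_zero]
  have hs := sum_zero n
  rw [Finset.sum_sub_distrib, Finset.sum_sub_distrib, ← Finset.mul_sum, ← Finset.mul_sum,
    ← Finset.mul_sum, e2, e1, e0] at hs
  have key2 : ((n:ℤ)+2)^2 * (a (n+2) : ℤ)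
      = (11*((n:ℤ)+2)^2 - 11*((n:ℤ)+2) + 3) * (a (n+1) : ℤ) + ((n:ℤ)+1)^2 * (a n : ℤ) := by
    have : ((n:ℚ)+2)^2 * (a (n+2) : ℚ)
        = (11*((n:ℚ)+2)^2 - 11*((n:ℚ)+2) + 3) * (a (n+1) : ℚ) + ((n:ℚ)+1)^2 * (a n : ℚ) := by
      linarith
    exact_mod_cast this
  push_cast
  linear_combination key2
end
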